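/- Magic state rounding implements, in expectation, the depolarizing channel with parameter 1/3: for every 2×2 complex matrix A, (1/4)·Σ_{u ∈ {−1,1}³} tr(μ_u·A)·μ_u = (1/3)·A + (1/3)·(tr A)·I = E_{1/3}(A). -/
import Mathlib


open Matrix

/-- The Pauli `X` matrix. -/
noncomputable def PX : Matrix (Fin 2) (Fin 2) ℂ := !![0, 1; 1, 0]

/-- The Pauli `Y` matrix. -/
noncomputable def PY : Matrix (Fin 2) (Fin 2) ℂ := !![0, -Complex.I; Complex.I, 0]

/-- The Pauli `Z` matrix. -/
noncomputable def PZ : Matrix (Fin 2) (Fin 2) ℂ := !![1, 0; 0, -1]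

/-- The single-qubit magic state `μ_u` for `u ∈ {−1,1}³`. -/
noncomputable def magic (u : Fin 3 → ℝ) : Matrix (Fin 2) (Fin 2) ℂ :=
  (1 / 2 : ℂ) • ((1 : Matrix (Fin 2) (Fin 2) ℂ) +
    (1 / (Real.sqrt 3 : ℂ)) • ((u 0 : ℂ) • PX + (u 1 : ℂ) • PY + (u 2 : ℂ) • PZ))

/-- `±1`-valued sign of a Boolean, used to enumerate `{−1,1}³` by `Fin 3 → Bool`. -/
noncomputable def bsign (b : Bool) : ℝ := if b then 1 else -1

/-- The single-qubit depolarizing channel `E_δ(A) = δ·A + ((1−δ)/2)·(tr A)·I`. -/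
noncomputable def depol (δ : ℝ) (A : Matrix (Fin 2) (Fin 2) ℂ) : Matrix (Fin 2) (Fin 2) ℂ :=
  (δ : ℂ) • A + (((1 - δ) / 2 : ℝ) : ℂ) • A.trace • (1 : Matrix (Fin 2) (Fin 2) ℂ)

lemma sumpi {M : Type*} [AddCommMonoid M] (f : (Fin 3 → Bool) → M) :
    ∑ s : Fin 3 → Bool, f s =
      ∑ p : Bool × Bool × Bool, f ![p.1, p.2.1, p.2.2] := by
  exact (Fintype.sum_bijective (fun p : Bool × Bool × Bool => (![p.1, p.2.1, p.2.2] : Fin 3 → Bool))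
    (by decide) _ _ (fun _ => rfl)).symm

/-- Explicit entrywise form of the magic state. -/
noncomputable def mg (a b c : ℝ) : Matrix (Fin 2) (Fin 2) ℂ :=
  let w : ℂ := 1 / (Real.sqrt 3 : ℂ)
  !![1/2 + w * c / 2, w * a / 2 - w * b / 2 * Complex.I;
     w * a / 2 + w * b / 2 * Complex.I, 1/2 - w * c / 2]

lemma magic_eq (a b c : ℝ) : magic ![a, b, c] = mg a b c := by
  ext i j
  fin_cases i <;> fin_cases j <;>
    simp [magic, mg, PX, PY, PZ, Matrix.one_apply] <;> ring

set_option maxHeartbeats 1000000 in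
lemma key (A : Matrix (Fin 2) (Fin 2) ℂ) :
    (1 / 4 : ℂ) • ∑ s : Fin 3 → Bool,
        (magic (fun i => bsign (s i)) * A).trace • magic (fun i => bsign (s i)) =
      (1 / 3 : ℂ) • A + (1 / 3 : ℂ) • A.trace • (1 : Matrix (Fin 2) (Fin 2) ℂ) := by
  have h : (1 / (Real.sqrt 3 : ℂ))^2 = 1/3 := by
    rw [div_pow, one_pow, ← Complex.ofReal_pow, Real.sq_sqrt (by norm_num : (0:ℝ) ≤ 3)]
    norm_num
  have hfun : ∀ s : Fin 3 → Bool, (fun i => bsign (s i)) = ![bsign (s 0), bsign (s 1), bsign (s 2)] := by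
    intro s; funext i; fin_cases i <;> rfl
  simp only [hfun, magic_eq, sumpi]
  simp only [Fintype.sum_prod_type, Fintype.sum_bool, Matrix.cons_val_zero, Matrix.cons_val_one,
    Matrix.head_cons, bsign, if_true, if_false, Bool.cond_true]
  norm_num
  ext i j
  fin_cases i <;> fin_cases j <;>
    simp [mg, Matrix.trace, Matrix.diag, Matrix.mul_apply, Fin.sum_univ_succ, Matrix.one_apply]
  · linear_combination ((A 0 0 - A 1 1)/2) * h
  · linear_combination (A 0 1) * h + ((Real.sqrt 3 : ℂ))⁻¹^2 * (A 1 0 - A 0 1)/2 * Complex.I_sq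
  · linear_combination (A 1 0) * h + ((Real.sqrt 3 : ℂ))⁻¹^2 * (A 0 1 - A 1 0)/2 * Complex.I_sq
  · linear_combination ((A 1 1 - A 0 0)/2) * h

theorem magic_rounding_is_depolarizing (A : Matrix (Fin 2) (Fin 2) ℂ) :
    (1 / 4 : ℂ) • ∑ s : Fin 3 → Bool,
        (magic (fun i => bsign (s i)) * A).trace • magic (fun i => bsign (s i)) =
      (1 / 3 : ℂ) • A + (1 / 3 : ℂ) • A.trace • (1 : Matrix (Fin 2) (Fin 2) ℂ) ∧
    (1 / 4 : ℂ) • ∑ s : Fin 3 → Bool,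
        (magic (fun i => bsign (s i)) * A).trace • magic (fun i => bsign (s i)) =
      depol (1 / 3) A := by
  refine ⟨key A, ?_⟩
  rw [key A, depol]
  norm_num
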